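/- arXiv:2309.16112 — 4 statements merged into one kernel-verified Lean document; each statement's English description precedes it below -/
import Mathlib

section
/- The semigroup algebra C[σ_{a,b}^∨ ∩ M] is generated as a C-algebra by the four Laurent monomials t1, t2, t2^{-1}t3, and t1^{-1}t2^{b-a}t3^{a}; that is, these monomials form a Hilbert basis generating set of the dual-cone semigroup. -/
/-!
The cone `{m | m₃ ≥ 0, a m₁ + m₃ ≥ 0, b m₁ + m₂ + m₃ ≥ 0, m₂ + m₃ ≥ 0}` is cut by the
hyperplane `m₁ = 0` into two unimodular simplicial cones. On the half `m₁ ≥ 0`,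
`m = m₁ (1,0,0) + (m₂ + m₃) (0,1,0) + m₃ (0,-1,1)`, and on the half `m₁ ≤ 0`,
`m = (b m₁ + m₂ + m₃) (0,1,0) + (a m₁ + m₃) (0,-1,1) + (-m₁) (-1,b-a,a)`;
in both cases the coefficients are `±m₁` or left-hand sides of the defining inequalities,
hence non-negative integers.
-/

/-- The semigroup `σ_{a,b}^∨ ∩ M` of lattice points of the dual cone of the cone
`σ_{a,b}` over the trapezoid `Δ(a,b)`, the cone generated by
`(0,0,1), (a,0,1), (b,1,1), (0,1,1)` in `N = ℤ³`. -/
def dualConeSemigroup (a b : ℕ) : AddSubmonoid (ℤ × ℤ × ℤ) where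
  carrier := {m | 0 ≤ m.2.2 ∧ 0 ≤ (a : ℤ) * m.1 + m.2.2 ∧
    0 ≤ (b : ℤ) * m.1 + m.2.1 + m.2.2 ∧ 0 ≤ m.2.1 + m.2.2}
  zero_mem' := by simp
  add_mem' := by
    intro x y hx hy
    simp only [Set.mem_setOf_eq, Prod.fst_add, Prod.snd_add, mul_add] at hx hy ⊢
    obtain ⟨h1, h2, h3, h4⟩ := hx
    obtain ⟨g1, g2, g3, g4⟩ := hy
    exact ⟨by linarith, by linarith, by linarith, by linarith⟩

def dualConeGenerators (a b : ℕ) : Set (ℤ × ℤ × ℤ) :=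
  {(1, 0, 0), (0, 1, 0), (0, -1, 1), (-1, (b : ℤ) - a, (a : ℤ))}

theorem AddSubmonoid.zsmul_mem_closure_of_nonneg {G : Type*} [AddGroup G] {s : Set G} {g : G}
    (hg : g ∈ s) {k : ℤ} (hk : 0 ≤ k) : k • g ∈ AddSubmonoid.closure s := by
  lift k to ℕ using hk
  simpa only [natCast_zsmul] using nsmul_mem (AddSubmonoid.subset_closure hg) k

section

variable {a b : ℕ}

theorem dualConeGenerators_subset_dualConeSemigroup :
    dualConeGenerators a b ⊆ dualConeSemigroup a b := by
  rintro m (rfl | rfl | rfl | rfl) <;> simp [dualConeSemigroup]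
  omega

theorem mem_closure_dualConeGenerators_of_fst_nonneg {m : ℤ × ℤ × ℤ}
    (hm : m ∈ dualConeSemigroup a b) (h₁ : 0 ≤ m.1) :
    m ∈ AddSubmonoid.closure (dualConeGenerators a b) := by
  obtain ⟨x, y, z⟩ := m
  obtain ⟨hz, -, -, hyz⟩ := hm
  have hdecomp : ((x, y, z) : ℤ × ℤ × ℤ) =
      x • (1, 0, 0) + (y + z) • (0, 1, 0) + z • (0, -1, 1) := by
    simp only [Prod.smul_mk, Prod.mk_add_mk, smul_eq_mul, Prod.mk.injEq]
    refine ⟨?_, ?_, ?_⟩ <;> ring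
  rw [hdecomp]
  refine add_mem (add_mem ?_ ?_) ?_ <;>
    refine AddSubmonoid.zsmul_mem_closure_of_nonneg (by simp [dualConeGenerators]) ?_
  · exact h₁
  · exact hyz
  · exact hz

theorem mem_closure_dualConeGenerators_of_fst_nonpos {m : ℤ × ℤ × ℤ}
    (hm : m ∈ dualConeSemigroup a b) (h₁ : m.1 ≤ 0) :
    m ∈ AddSubmonoid.closure (dualConeGenerators a b) := by
  obtain ⟨x, y, z⟩ := m
  obtain ⟨-, haxz, hbxyz, -⟩ := hm
  have hdecomp : ((x, y, z) : ℤ × ℤ × ℤ) = (b * x + y + z) • (0, 1, 0) +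
      (a * x + z) • (0, -1, 1) + (-x) • (-1, (b : ℤ) - a, (a : ℤ)) := by
    simp only [Prod.smul_mk, Prod.mk_add_mk, smul_eq_mul, Prod.mk.injEq]
    refine ⟨?_, ?_, ?_⟩ <;> ring
  rw [hdecomp]
  refine add_mem (add_mem ?_ ?_) ?_ <;>
    refine AddSubmonoid.zsmul_mem_closure_of_nonneg (by simp [dualConeGenerators]) ?_
  · exact hbxyz
  · exact haxz
  · exact neg_nonneg.mpr h₁

end

theorem dualConeSemigroup_eq_closure_general (a b : ℕ) :
    dualConeSemigroup a b =
      AddSubmonoid.closure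
        {((1 : ℤ), (0 : ℤ), (0 : ℤ)), ((0 : ℤ), (1 : ℤ), (0 : ℤ)),
         ((0 : ℤ), (-1 : ℤ), (1 : ℤ)), ((-1 : ℤ), (b : ℤ) - (a : ℤ), (a : ℤ))} := by
  change dualConeSemigroup a b = AddSubmonoid.closure (dualConeGenerators a b)
  refine le_antisymm (fun m hm => ?_) ?_
  · rcases le_total 0 m.1 with h₁ | h₁
    · exact mem_closure_dualConeGenerators_of_fst_nonneg hm h₁
    · exact mem_closure_dualConeGenerators_of_fst_nonpos hm h₁
  · exact AddSubmonoid.closure_le.mpr dualConeGenerators_subset_dualConeSemigroup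

/-- The semigroup `σ_{a,b}^∨ ∩ M` is generated by the exponent vectors
of the four Laurent monomials `t₁`, `t₂`, `t₂⁻¹t₃`, `t₁⁻¹t₂^{b-a}t₃^{a}`, i.e. by
`(1,0,0)`, `(0,1,0)`, `(0,-1,1)`, `(-1,b-a,a)`; equivalently these monomials form a
Hilbert-basis generating set of the dual-cone semigroup, so they generate
`ℂ[σ_{a,b}^∨ ∩ M]` as a `ℂ`-algebra. -/
theorem dualConeSemigroup_eq_closure (a b : ℕ) (ha : 1 ≤ a) (hb : b ≤ a) :
    dualConeSemigroup a b =
      AddSubmonoid.closure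
        {((1 : ℤ), (0 : ℤ), (0 : ℤ)), ((0 : ℤ), (1 : ℤ), (0 : ℤ)),
         ((0 : ℤ), (-1 : ℤ), (1 : ℤ)), ((-1 : ℤ), (b : ℤ) - (a : ℤ), (a : ℤ))} :=
  dualConeSemigroup_eq_closure_general a b
end

section
/- Let P and P' be adjacent corner perfect matchings of a consistent dimer model with symmetric difference P ⊖ P' = {z_1, ..., z_r} (zigzag paths of equal slope), where P ∩ z_i = Zig(z_i) and P' ∩ z_i = Zag(z_i). Then for every subset I ⊆ {1,...,r}, the edge set P_I := (⋃_{i ∉ I} Zig(z_i)) ∪ (⋃_{i ∈ I} Zag(z_i)) ∪ (P ∩ P') is a perfect matching of the dimer model. -/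
open Finset

/-- A perfect matching of a (dimer) graph, encoded by its incidence relation
`inc e v` ("edge `e` has endpoint `v`"): a set of edges such that every node is an
endpoint of exactly one edge of the set. -/
def IsPerfectMatching {N E : Type*} (inc : E → N → Prop) (P : Finset E) : Prop :=
  ∀ v : N, ∃! e : E, e ∈ P ∧ inc e v

/-!
`P_I` is `P` outside `S = ⋃_{i ∈ I} z_i` together with `P'` on `S`. Since each `z_i` alternates,
a node whose `P`-edge lies on `z_i` also has its `P'`-edge on `z_i`, and conversely; so at every
node either both matching edges lie in `S` or neither does, and exactly one edge of `P_I` remains.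
-/

section Switching

variable {N E : Type*} [DecidableEq E] {inc : E → N → Prop}

theorem IsPerfectMatching.sdiff_union_inter {P P' S : Finset E}
    (hP : IsPerfectMatching inc P) (hP' : IsPerfectMatching inc P')
    (hS : ∀ v, ∀ e ∈ P, ∀ f ∈ P', inc e v → inc f v → (e ∈ S ↔ f ∈ S)) :
    IsPerfectMatching inc (P \ S ∪ P' ∩ S) := by
  intro v
  obtain ⟨e, ⟨heP, hev⟩, he⟩ := hP v
  obtain ⟨f, ⟨hfP', hfv⟩, hf⟩ := hP' v
  by_cases heS : e ∈ S
  · have hfS : f ∈ S := (hS v e heP f hfP' hev hfv).1 heS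
    refine ⟨f, ⟨mem_union_right _ (mem_inter.2 ⟨hfP', hfS⟩), hfv⟩, ?_⟩
    rintro g ⟨hg, hgv⟩
    rcases mem_union.1 hg with hg | hg
    · exact absurd (he g ⟨(mem_sdiff.1 hg).1, hgv⟩ ▸ heS) (mem_sdiff.1 hg).2
    · exact hf g ⟨(mem_inter.1 hg).1, hgv⟩
  · refine ⟨e, ⟨mem_union_left _ (mem_sdiff.2 ⟨heP, heS⟩), hev⟩, ?_⟩
    rintro g ⟨hg, hgv⟩
    rcases mem_union.1 hg with hg | hg
    · exact he g ⟨(mem_sdiff.1 hg).1, hgv⟩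
    · have hfS : f ∈ S := hf g ⟨(mem_inter.1 hg).1, hgv⟩ ▸ (mem_inter.1 hg).2
      exact absurd ((hS v e heP f hfP' hev hfv).2 hfS) heS

theorem mem_union_of_alternating {P P' Zig Zag : Finset E} (hP' : IsPerfectMatching inc P')
    (hPz : P ∩ (Zig ∪ Zag) = Zig) (hP'z : P' ∩ (Zig ∪ Zag) = Zag)
    (hcycle : ∀ v, (∃ e ∈ Zig, inc e v) → ∃ e ∈ Zag, inc e v)
    {v : N} {e f : E} (heP : e ∈ P) (he : e ∈ Zig ∪ Zag) (hfP' : f ∈ P')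
    (hev : inc e v) (hfv : inc f v) : f ∈ Zig ∪ Zag := by
  have heZig : e ∈ Zig := hPz ▸ mem_inter.2 ⟨heP, he⟩
  obtain ⟨g, hgZag, hgv⟩ := hcycle v ⟨e, heZig, hev⟩
  have hgP' : g ∈ P' := (mem_inter.1 (hP'z.symm ▸ hgZag)).1
  rw [(hP' v).unique ⟨hfP', hfv⟩ ⟨hgP', hgv⟩]
  exact mem_union_right _ hgZag

variable {ι : Type*} {P P' : Finset E} {Zig Zag : ι → Finset E}

theorem mem_biUnion_iff_of_alternating
    (hP : IsPerfectMatching inc P) (hP' : IsPerfectMatching inc P')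
    (hPz : ∀ i, P ∩ (Zig i ∪ Zag i) = Zig i) (hP'z : ∀ i, P' ∩ (Zig i ∪ Zag i) = Zag i)
    (hcycle : ∀ i (v : N), (∃ e ∈ Zig i, inc e v) ↔ (∃ e ∈ Zag i, inc e v)) (I : Finset ι) :
    ∀ v, ∀ e ∈ P, ∀ f ∈ P', inc e v → inc f v →
      (e ∈ I.biUnion (fun i => Zig i ∪ Zag i) ↔ f ∈ I.biUnion (fun i => Zig i ∪ Zag i)) := by
  intro v e heP f hfP' hev hfv
  simp only [mem_biUnion]
  constructor
  · rintro ⟨i, hi, he⟩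
    exact ⟨i, hi, mem_union_of_alternating hP' (hPz i) (hP'z i) (fun v => (hcycle i v).1)
      heP he hfP' hev hfv⟩
  · rintro ⟨i, hi, hf⟩
    refine ⟨i, hi, union_comm (Zag i) (Zig i) ▸ ?_⟩
    exact mem_union_of_alternating hP (union_comm (Zig i) (Zag i) ▸ hP'z i)
      (union_comm (Zig i) (Zag i) ▸ hPz i) (fun v => (hcycle i v).2)
      hfP' (union_comm (Zig i) (Zag i) ▸ hf) heP hfv hev

theorem biUnion_zig_union_biUnion_zag_union_inter_eq [Fintype ι] [DecidableEq ι]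
    (hPz : ∀ i, P ∩ (Zig i ∪ Zag i) = Zig i) (hP'z : ∀ i, P' ∩ (Zig i ∪ Zag i) = Zag i)
    (hsd : (P ∪ P') \ (P ∩ P') = univ.biUnion (fun i => Zig i ∪ Zag i))
    (hdisj : ∀ i j, i ≠ j → Disjoint (Zig i ∪ Zag i) (Zig j ∪ Zag j)) (I : Finset ι) :
    (univ \ I).biUnion Zig ∪ I.biUnion Zag ∪ (P ∩ P') =
      P \ I.biUnion (fun i => Zig i ∪ Zag i) ∪ P' ∩ I.biUnion (fun i => Zig i ∪ Zag i) := by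
  have hZigP : ∀ i, Zig i ⊆ P := fun i => hPz i ▸ inter_subset_left
  have hZagP' : ∀ i, Zag i ⊆ P' := fun i => hP'z i ▸ inter_subset_left
  have hsd_mem : ∀ e, (e ∈ P ∨ e ∈ P') ∧ ¬(e ∈ P ∧ e ∈ P') ↔ ∃ i, e ∈ Zig i ∨ e ∈ Zag i := by
    intro e
    simpa using congrArg (e ∈ ·) hsd
  ext e
  simp only [mem_union, mem_sdiff, mem_inter, mem_biUnion, mem_univ, true_and, not_exists,
    not_and]
  constructor
  · rintro ((⟨i, hiI, he⟩ | ⟨i, hiI, he⟩) | ⟨heP, heP'⟩)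
    · refine Or.inl ⟨hZigP i he, fun j hjI hej => ?_⟩
      have hij : i ≠ j := by rintro rfl; exact hiI hjI
      exact disjoint_left.1 (hdisj i j hij) (mem_union_left _ he) (mem_union.2 hej)
    · exact Or.inr ⟨hZagP' i he, i, hiI, Or.inr he⟩
    · exact Or.inl ⟨heP, fun i _ hei => ((hsd_mem e).2 ⟨i, hei⟩).2 ⟨heP, heP'⟩⟩
  · rintro (⟨heP, heS⟩ | ⟨heP', i, hiI, hei⟩)
    · by_cases heP' : e ∈ P'
      · exact Or.inr ⟨heP, heP'⟩
      · obtain ⟨i, hei⟩ := (hsd_mem e).1 ⟨Or.inl heP, fun h => heP' h.2⟩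
        have hiI : i ∉ I := fun hiI => heS i hiI hei
        exact Or.inl (Or.inl ⟨i, hiI, hPz i ▸ mem_inter.2 ⟨heP, mem_union.2 hei⟩⟩)
    · exact Or.inl (Or.inr ⟨i, hiI, hP'z i ▸ mem_inter.2 ⟨heP', mem_union.2 hei⟩⟩)

end Switching

/-- Let `P`, `P'` be adjacent corner perfect matchings of a consistent
dimer model with symmetric difference `P ⊖ P' = {z_1, …, z_r}`, a family of pairwise
non-intersecting zigzag paths of equal slope, with `P ∩ z_i = Zig(z_i)` and
`P' ∩ z_i = Zag(z_i)`.  (Each `z_i` is a closed alternating cycle: every node met by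
`z_i` is incident to exactly one zig and one zag of `z_i`.)  Then for every subset
`I ⊆ {1,…,r}` the edge set
`P_I = (⋃_{i ∉ I} Zig(z_i)) ∪ (⋃_{i ∈ I} Zag(z_i)) ∪ (P ∩ P')`
is a perfect matching. -/
theorem pmOf_subset_isPerfectMatching
    {N E : Type*} [DecidableEq E] (inc : E → N → Prop)
    (r : ℕ) (Zig Zag : Fin r → Finset E) (P P' : Finset E)
    (hP : IsPerfectMatching inc P) (hP' : IsPerfectMatching inc P')
    (hPz : ∀ i, P ∩ (Zig i ∪ Zag i) = Zig i)
    (hP'z : ∀ i, P' ∩ (Zig i ∪ Zag i) = Zag i)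
    (hsd : (P ∪ P') \ (P ∩ P') = Finset.univ.biUnion (fun i => Zig i ∪ Zag i))
    (hdisj : ∀ i j, i ≠ j → Disjoint (Zig i ∪ Zag i) (Zig j ∪ Zag j))
    (hcycle : ∀ i (v : N), (∃ e ∈ Zig i, inc e v) ↔ (∃ e ∈ Zag i, inc e v)) :
    ∀ I : Finset (Fin r),
      IsPerfectMatching inc
        (((Finset.univ \ I).biUnion Zig) ∪ (I.biUnion Zag) ∪ (P ∩ P')) := by
  intro I
  rw [biUnion_zig_union_biUnion_zag_union_inter_eq hPz hP'z hsd hdisj I]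
  exact hP.sdiff_union_inter hP' (mem_biUnion_iff_of_alternating hP hP' hPz hP'z hcycle I)
end

section
/- Consider the hyperplane arrangement in the space {θ ∈ R^n : θ_1 + ... + θ_n = 0} given for each permutation ω ∈ S_n and each k = 1,...,n−1 by the cone C_ω = {θ : ε_k(ω) · Σ_{v ∈ R_k(ω)} θ_v > 0 for all k}, where R_k(ω) is the cyclic interval {ω(k+1), ω(k+1)+1, ..., ω(k)−1} (mod n) when ω(k) > ω(k+1), taken appropriately, and ε_k(ω) = +1 if ω(k) > ω(k+1) and −1 otherwise. Then the inequality for index k is not implied by the inequalities for the other indices s ≠ k; i.e., each of the n−1 defining inequalities of C_ω determines a genuine facet (wall) of C_ω. -/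
/-!
Writing `P(a) = θ₀ + ⋯ + θₐ` for the prefix sums, the sum of `θ` over the block between
`i` and `j` is `P(max i j) - P(min i j)`, so whatever the order of `i` and `j`, the inequality
attached to `(i, j)` says exactly `P(j) < P(i)`. On the hyperplane `∑ θ = 0` the prefix sums
can be prescribed arbitrarily up to an additive constant. Prescribing `P(ω m) = c m` for a
sequence `c` that descends at every step except from `k` to `k + 1` violates the `k`-th
inequality and satisfies all the others.
-/

open Finset

/-- The cyclic block of coordinates `{min(i,j)+1, …, max(i,j)}` attached to the pair
of indices `(i,j)`; these are the regions `R_k(ω)` of the hyperplane arrangement. -/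
def region (n : ℕ) (i j : Fin n) : Finset (Fin n) :=
  Finset.univ.filter (fun v : Fin n => min i.1 j.1 < v.1 ∧ v.1 ≤ max i.1 j.1)

/-- The strict inequality attached to the consecutive pair at positions `k, k+1` of
`ω`: `ε_k(ω) · Σ_{v ∈ R_k(ω)} θ_v > 0` where `ε_k(ω) = +1` iff `ω(k) > ω(k+1)`. -/
def ineqAt (n : ℕ) (i j : Fin n) (θ : Fin n → ℝ) : Prop :=
  if j.1 < i.1 then 0 < ∑ v ∈ region n i j, θ v else (∑ v ∈ region n i j, θ v) < 0

section PrefixSum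

variable {M : Type*} [AddCommGroup M]

def prefixSum {n : ℕ} (θ : Fin n → M) (a : ℕ) : M :=
  ∑ v ∈ univ.filter (fun v : Fin n => v.1 ≤ a), θ v

lemma region_eq_sdiff (n : ℕ) (i j : Fin n) :
    region n i j = univ.filter (fun v : Fin n => v.1 ≤ max i.1 j.1) \
      univ.filter (fun v : Fin n => v.1 ≤ min i.1 j.1) := by
  ext v
  simp only [region, mem_filter, mem_univ, true_and, mem_sdiff, not_le]
  tauto

lemma sum_region_eq_sub (n : ℕ) (i j : Fin n) (θ : Fin n → M) :
    ∑ v ∈ region n i j, θ v = prefixSum θ (max i.1 j.1) - prefixSum θ (min i.1 j.1) := by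
  rw [region_eq_sdiff, sum_sdiff_eq_sub]
  · rfl
  · exact monotone_filter_right _ fun _ _ hv => hv.trans min_le_max

lemma sum_sub_telescope (n : ℕ) (F : ℕ → M) :
    ∑ v : Fin n, (F (v.1 + 1) - F v.1) = F n - F 0 := by
  rw [Fin.sum_univ_eq_sum_range (fun i => F (i + 1) - F i), sum_range_sub]

lemma prefixSum_sub_telescope {n : ℕ} (F : ℕ → M) {a : ℕ} (ha : a < n) :
    prefixSum (fun v : Fin n => F (v.1 + 1) - F v.1) a = F (a + 1) - F 0 := by
  unfold prefixSum
  rw [sum_filter, Fin.sum_univ_eq_sum_range (fun i => if i ≤ a then F (i + 1) - F i else 0),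
    ← sum_filter]
  have hrange : (range n).filter (· ≤ a) = range (a + 1) := by
    ext i
    simp only [mem_filter, mem_range]
    omega
  rw [hrange, sum_range_sub]

lemma exists_sum_eq_zero_prefixSum_eq {n : ℕ} (f : Fin n → M) :
    ∃ θ : Fin n → M, ∑ v, θ v = 0 ∧ ∃ C : M, ∀ v : Fin n, prefixSum θ v.1 = f v - C := by
  let g : ℕ → M := fun t => if h : t < n then f ⟨t, h⟩ else 0
  -- `F (t + 1) = g t` is the wanted prefix sum; `F 0 = F n` makes the total sum vanish.
  let F : ℕ → M := fun t => if t = 0 then g (n - 1) else g (t - 1)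
  refine ⟨fun v => F (v.1 + 1) - F v.1, ?_, g (n - 1), fun v => ?_⟩
  · rw [sum_sub_telescope, sub_eq_zero]
    simp only [F]
    split_ifs <;> simp_all
  · rw [prefixSum_sub_telescope F v.2]
    simp [F, g]

end PrefixSum

lemma ineqAt_iff_prefixSum_lt (n : ℕ) (i j : Fin n) (θ : Fin n → ℝ) :
    ineqAt n i j θ ↔ prefixSum θ j.1 < prefixSum θ i.1 := by
  unfold ineqAt
  rw [sum_region_eq_sub]
  split_ifs with h
  · rw [max_eq_left h.le, min_eq_right h.le, sub_pos]
  · rw [max_eq_right (not_lt.1 h), min_eq_left (not_lt.1 h), sub_neg]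

lemma exists_succ_lt_iff_ne (k : ℕ) : ∃ c : ℕ → ℝ, ∀ m, c (m + 1) < c m ↔ m ≠ k := by
  refine ⟨fun m => -(m : ℝ) + if k < m then 1 else 0, fun m => ?_⟩
  rcases lt_trichotomy m k with h | rfl | h
  · simp [h.ne, not_lt.2 h.le, Nat.not_lt.2 (Nat.succ_le_of_lt h)]
  · simp
  · simp [h.ne', h, h.trans (Nat.lt_succ_self m)]

theorem chamber_inequalities_irredundant_general (n : ℕ)
    (ω : Equiv.Perm (Fin n)) (k : ℕ) (hk : k + 1 < n) :
    ∃ θ : Fin n → ℝ, (∑ v, θ v) = 0 ∧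
      (∀ (m : ℕ) (hm : m + 1 < n), m ≠ k →
        ineqAt n (ω ⟨m, Nat.lt_of_succ_lt hm⟩) (ω ⟨m + 1, hm⟩) θ) ∧
      ¬ ineqAt n (ω ⟨k, Nat.lt_of_succ_lt hk⟩) (ω ⟨k + 1, hk⟩) θ := by
  obtain ⟨c, hc⟩ := exists_succ_lt_iff_ne k
  obtain ⟨θ, hθ, C, hP⟩ := exists_sum_eq_zero_prefixSum_eq fun v => c (ω.symm v)
  have hineq : ∀ m (hm : m + 1 < n),
      ineqAt n (ω ⟨m, Nat.lt_of_succ_lt hm⟩) (ω ⟨m + 1, hm⟩) θ ↔ m ≠ k := by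
    intro m hm
    simp [ineqAt_iff_prefixSum_lt, hP, hc]
  exact ⟨θ, hθ, fun m hm => (hineq m hm).2, fun h => (hineq k hk).1 h rfl⟩

/-- In the hyperplane `{θ ∈ ℝⁿ : θ_1 + … + θ_n = 0}`, the defining
system of the cone `C_ω = {θ : ε_k(ω)·Σ_{v ∈ R_k(ω)} θ_v > 0 for all k}` is
irredundant: for each index `k` the `k`-th inequality is not implied by the others,
i.e. there exists `θ` satisfying all inequalities with index `s ≠ k` but failing the
`k`-th one.  Hence each of the `n-1` inequalities determines a genuine facet (wall)
of `C_ω`. -/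
theorem chamber_inequalities_irredundant (n : ℕ) (hn : 2 ≤ n)
    (ω : Equiv.Perm (Fin n)) (k : ℕ) (hk : k + 1 < n) :
    ∃ θ : Fin n → ℝ, (∑ v, θ v) = 0 ∧
      (∀ (m : ℕ) (hm : m + 1 < n), m ≠ k →
        ineqAt n (ω ⟨m, Nat.lt_of_succ_lt hm⟩) (ω ⟨m + 1, hm⟩) θ) ∧
      ¬ ineqAt n (ω ⟨k, Nat.lt_of_succ_lt hk⟩) (ω ⟨k + 1, hk⟩) θ :=
  chamber_inequalities_irredundant_general n ω k hk
end

section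
/- Every GIT region of Θ(Q)_R for the toric cA_{n-1} singularity R_{a,b} contains exactly n!/(a! b!) chambers, and the number of GIT regions is a! · b!. -/
/-- Two permutations `ω`, `ω' = ω·s_k` of the index set of the zigzag paths are joined
by a wall of type I exactly when the adjacent transposition `s_k` swaps two zigzag
paths of opposite slopes, i.e. it exchanges a `-1` and a `+1` in the sign sequence
(the first `a` letters have sign `-1`, the remaining `b` have sign `+1`). -/
def TypeIAdjacent (a n : ℕ) (ω ω' : Equiv.Perm (Fin n)) : Prop :=
  ∃ (k : ℕ) (h : k + 1 < n),
    ω' = ω * Equiv.swap ⟨k, Nat.lt_of_succ_lt h⟩ ⟨k + 1, h⟩ ∧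
    ¬ (((ω ⟨k, Nat.lt_of_succ_lt h⟩).1 < a) ↔ ((ω ⟨k + 1, h⟩).1 < a))

/-!
Crossing a type I wall swaps two adjacent zigzag paths of opposite slopes. It therefore moves
the set of positions of the slope `-1` paths by an adjacent transposition, and it preserves the
relative order of any two paths of equal slope. A chamber `ω` is determined by that set of
positions together with that relative order. Conversely, any two `a`-element sets of positions
are joined by adjacent transpositions, since both can be pushed down to the initial segment.
Hence the set of positions maps each GIT region bijectively onto the `a`-subsets of
`Fin (a + b)`, and the regions, all of size `(a + b).choose a`, partition the `(a + b)!`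
chambers.
-/

section

open Finset Equiv Relation

theorem Nat.exists_notMem_add_one_mem {S : Set ℕ} {i j : ℕ} (hij : i ≤ j) (hi : i ∉ S)
    (hj : j ∈ S) : ∃ k < j, k ∉ S ∧ k + 1 ∈ S := by
  induction j, hij using Nat.le_induction with
  | base => exact absurd hj hi
  | succ j _ ih =>
    by_cases h : j ∈ S
    · obtain ⟨k, hk, hkS⟩ := ih h
      exact ⟨k, by omega, hkS⟩
    · exact ⟨j, by omega, h, hj⟩

theorem Fin.exists_notMem_succ_mem_of_not_isLowerSet {n : ℕ} {W : Finset (Fin n)}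
    (hW : ¬ IsLowerSet (W : Set (Fin n))) :
    ∃ (k : ℕ) (hk : k + 1 < n),
      (⟨k, by omega⟩ : Fin n) ∉ W ∧ (⟨k + 1, hk⟩ : Fin n) ∈ W := by
  simp only [IsLowerSet, mem_coe, not_forall] at hW
  obtain ⟨j, i, hij, hj, hi⟩ := hW
  obtain ⟨k, hkj, hk, hk1⟩ :=
    Nat.exists_notMem_add_one_mem (S := {m | ∃ h : m < n, ⟨m, h⟩ ∈ W})
    (Fin.le_def.1 hij) (by simpa using hi) ⟨j.2, hj⟩
  obtain ⟨hk1n, hk1W⟩ := hk1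
  exact ⟨k, hk1n, fun h => hk ⟨by omega, h⟩, hk1W⟩

theorem Finset.eq_of_isLowerSet_of_card_eq {α : Type*} [LinearOrder α] {s t : Finset α}
    (hs : IsLowerSet (s : Set α)) (ht : IsLowerSet (t : Set α)) (h : #s = #t) : s = t := by
  rcases le_total (⟨s, hs⟩ : LowerSet α) ⟨t, ht⟩ with hst | hts
  · exact eq_of_subset_of_card_le (coe_subset.1 (LowerSet.coe_subset_coe.2 hst)) h.ge
  · exact (eq_of_subset_of_card_le (coe_subset.1 (LowerSet.coe_subset_coe.2 hts)) h.le).symm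

theorem Fin.swap_lt_swap_iff_of_val_eq_add_one {n : ℕ} {p q x y : Fin n} (hq : q.1 = p.1 + 1)
    (hpq : ¬ (x = p ∧ y = q)) (hqp : ¬ (x = q ∧ y = p)) :
    swap p q x < swap p q y ↔ x < y := by
  simp only [swap_apply_def, Fin.ext_iff, Fin.lt_def] at *
  split_ifs <;> omega

theorem Equiv.Perm.eq_one_of_lt_iff {α : Type*} [LinearOrder α] [WellFoundedLT α]
    {P : α → Prop} {τ : Perm α} (hP : ∀ x, P (τ x) ↔ P x)
    (hlt : ∀ x y, (P x ↔ P y) → (τ x < τ y ↔ x < y)) : τ = 1 := by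
  have le_apply : ∀ σ : Perm α, (∀ x, P (σ x) ↔ P x) →
      (∀ x y, (P x ↔ P y) → (σ x < σ y ↔ x < y)) → ∀ x, x ≤ σ x := by
    intro σ hP hlt x
    induction x using WellFoundedLT.induction with
    | _ x ih =>
      by_contra! h
      exact (ih _ h).not_gt ((hlt _ _ (hP x)).2 h)
  have hP' : ∀ x, P (τ⁻¹ x) ↔ P x := fun x => by simpa using (hP (τ⁻¹ x)).symm
  have hlt' : ∀ x y, (P x ↔ P y) → (τ⁻¹ x < τ⁻¹ y ↔ x < y) := fun x y hxy => by
    simpa using (hlt (τ⁻¹ x) (τ⁻¹ y) (by rwa [hP', hP'])).symm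
  exact Equiv.ext fun x =>
    le_antisymm (by simpa using le_apply τ⁻¹ hP' hlt' (τ x)) (le_apply τ hP hlt x)

theorem Equivalence.ncard_classes_mul {α : Type*} [Fintype α] {r : α → α → Prop}
    (hr : Equivalence r) {c : ℕ} (hc : ∀ x, {y | r x y}.ncard = c) :
    {S : Set α | ∃ x, S = {y | r x y}}.ncard * c = Fintype.card α := by
  classical
  set cls : α → Set α := fun x => {y | r x y}
  have hcls : ∀ x y, cls y = cls x ↔ r x y := fun x y =>
    ⟨fun h => show y ∈ cls x from h ▸ hr.refl y,
      fun h => Set.ext fun z => ⟨hr.trans h, hr.trans (hr.symm h)⟩⟩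
  have hclasses : {S : Set α | ∃ x, S = cls x} = ↑(univ.image cls) := by
    ext S; simp [eq_comm]
  have hfiber : ∀ S ∈ univ.image cls, #{y | cls y = S} = c := by
    simp only [mem_image, mem_univ, true_and, forall_exists_index]
    rintro S x rfl
    rw [← hc x, ← Set.ncard_coe_finset]
    simp [hcls]
  rw [hclasses, Set.ncard_coe_finset, ← card_univ, card_eq_sum_card_image cls,
    sum_congr rfl hfiber, sum_const, smul_eq_mul]

namespace GITRegion

variable {n : ℕ}

/-- The positions of the `-1` letters in the sign sequence of `ω`. -/
def lowPositions (a : ℕ) (ω : Perm (Fin n)) : Finset (Fin n) :=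
  univ.filter fun i => (ω i).1 < a

/-- `v` and `w` are zigzag paths of equal slope and `v` comes before `w` in `ω`. -/
def sameSlopeOrder (a : ℕ) (ω : Perm (Fin n)) (v w : Fin n) : Prop :=
  (v.1 < a ↔ w.1 < a) ∧ ω⁻¹ v < ω⁻¹ w

def AdjacentSwap (W W' : Finset (Fin n)) : Prop :=
  ∃ (k : ℕ) (h : k + 1 < n),
    ¬ ((⟨k, Nat.lt_of_succ_lt h⟩ : Fin n) ∈ W ↔ (⟨k + 1, h⟩ : Fin n) ∈ W) ∧
    W' = W.map (swap ⟨k, Nat.lt_of_succ_lt h⟩ ⟨k + 1, h⟩).toEmbedding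

variable {a : ℕ}

@[simp]
theorem mem_lowPositions {ω : Perm (Fin n)} {i : Fin n} :
    i ∈ lowPositions a ω ↔ (ω i).1 < a := by
  simp [lowPositions]

theorem card_lowPositions (ω : Perm (Fin n)) : #(lowPositions a ω) = min n a := by
  rw [← Fin.card_filter_val_lt, ← map_univ_equiv ω, filter_map, card_map]
  rfl

theorem lowPositions_mul_swap (ω : Perm (Fin n)) (p q : Fin n) :
    lowPositions a (ω * swap p q) = (lowPositions a ω).map (swap p q).toEmbedding := by
  ext i
  simp [mem_map_equiv]

theorem sameSlopeOrder_eq_of_typeIAdjacent {ω ω' : Perm (Fin n)} (h : TypeIAdjacent a n ω ω') :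
    sameSlopeOrder a ω = sameSlopeOrder a ω' := by
  obtain ⟨k, hk, rfl, hsign⟩ := h
  funext v w
  simp only [sameSlopeOrder, mul_inv_rev, swap_inv, Perm.mul_apply]
  refine propext (and_congr_right fun hvw =>
    (Fin.swap_lt_swap_iff_of_val_eq_add_one rfl ?_ ?_).symm)
  all_goals
    rintro ⟨hv, hw⟩
    rw [Perm.inv_eq_iff_eq] at hv hw
    subst hv hw
    exact hsign (by tauto)

theorem sameSlopeOrder_eq_of_eqvGen {ω ω' : Perm (Fin n)}
    (h : EqvGen (TypeIAdjacent a n) ω ω') :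
    sameSlopeOrder a ω = sameSlopeOrder a ω' := by
  induction h with
  | rel _ _ h => exact sameSlopeOrder_eq_of_typeIAdjacent h
  | refl => rfl
  | symm _ _ _ ih => exact ih.symm
  | trans _ _ _ _ _ ih₁ ih₂ => exact ih₁.trans ih₂

theorem eq_of_lowPositions_eq_of_sameSlopeOrder_eq {ω₁ ω₂ : Perm (Fin n)}
    (hW : lowPositions a ω₁ = lowPositions a ω₂)
    (hord : sameSlopeOrder a ω₁ = sameSlopeOrder a ω₂) :
    ω₁ = ω₂ := by
  -- `ω₂⁻¹ * ω₁` preserves `lowPositions` and is monotone on it and on its complement.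
  have hτ : ω₂⁻¹ * ω₁ = 1 := by
    refine Perm.eq_one_of_lt_iff (P := (· ∈ lowPositions a ω₂)) (fun x => ?_)
      fun x y hxy => ?_
    · simpa using Finset.ext_iff.1 hW x
    · have := congrFun (congrFun hord (ω₁ x)) (ω₁ y)
      rw [← hW] at hxy
      simp only [sameSlopeOrder, mem_lowPositions] at this hxy
      simpa [hxy] using this.symm
  rw [mul_eq_one_iff_eq_inv, inv_inj] at hτ
  exact hτ.symm

theorem AdjacentSwap.symm {W W' : Finset (Fin n)} (h : AdjacentSwap W W') : AdjacentSwap W' W := by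
  obtain ⟨k, hk, hne, rfl⟩ := h
  refine ⟨k, hk, ?_, ?_⟩
  · simpa [mem_map_equiv] using fun h => hne h.symm
  · ext
    simp [mem_map_equiv]

instance : Std.Symm (AdjacentSwap (n := n)) :=
  ⟨fun _ _ => AdjacentSwap.symm⟩

theorem sum_val_map_swap_add_one {W : Finset (Fin n)} {k : ℕ} (hk : k + 1 < n)
    (hp : (⟨k, by omega⟩ : Fin n) ∉ W) (hq : (⟨k + 1, hk⟩ : Fin n) ∈ W) :
    ∑ i ∈ W.map (swap ⟨k, by omega⟩ ⟨k + 1, hk⟩).toEmbedding, i.1 + 1 =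
      ∑ i ∈ W, i.1 := by
  set s := swap (⟨k, by omega⟩ : Fin n) ⟨k + 1, hk⟩
  have hfix : ∀ i ∈ W.erase ⟨k + 1, hk⟩, (s i).1 = i.1 := fun i hi => by
    rw [swap_apply_of_ne_of_ne (ne_of_mem_of_not_mem (mem_of_mem_erase hi) hp) (ne_of_mem_erase hi)]
  calc ∑ i ∈ W.map s.toEmbedding, i.1 + 1
      = ((s ⟨k + 1, hk⟩).1 + ∑ i ∈ W.erase ⟨k + 1, hk⟩, (s i).1) + 1 := by
        rw [sum_map, Equiv.coe_toEmbedding, ← add_sum_erase W (fun i => (s i).1) hq]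
    _ = k + 1 + ∑ i ∈ W.erase ⟨k + 1, hk⟩, i.1 := by
        rw [swap_apply_right, sum_congr rfl hfix, Fin.val_mk, add_right_comm]
    _ = ∑ i ∈ W, i.1 := add_sum_erase _ (fun i : Fin n => i.1) hq

theorem exists_reflTransGen_isLowerSet (W : Finset (Fin n)) :
    ∃ L, ReflTransGen AdjacentSwap W L ∧ IsLowerSet (L : Set (Fin n)) ∧ #L = #W := by
  induction h : ∑ i ∈ W, i.1 using Nat.strong_induction_on generalizing W with
  | _ m ih =>
  by_cases hW : IsLowerSet (W : Set (Fin n))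
  · exact ⟨W, .refl, hW, rfl⟩
  obtain ⟨k, hk, hp, hq⟩ := Fin.exists_notMem_succ_mem_of_not_isLowerSet hW
  have hsum := sum_val_map_swap_add_one hk hp hq
  set W' := W.map (swap ⟨k, by omega⟩ ⟨k + 1, hk⟩).toEmbedding
  obtain ⟨L, hL, hLow, hcard⟩ := ih (∑ i ∈ W', i.1) (by omega) W' rfl
  exact ⟨L, .head ⟨k, hk, by tauto, rfl⟩ hL, hLow, hcard.trans (card_map _)⟩

theorem reflTransGen_adjacentSwap_of_card_eq {W W' : Finset (Fin n)} (h : #W = #W') :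
    ReflTransGen AdjacentSwap W W' := by
  obtain ⟨L, hWL, hL, hcL⟩ := exists_reflTransGen_isLowerSet W
  obtain ⟨L', hWL', hL', hcL'⟩ := exists_reflTransGen_isLowerSet W'
  rw [eq_of_isLowerSet_of_card_eq hL hL' (by omega)] at hWL
  exact hWL.trans (Std.Symm.symm _ _ hWL')

theorem exists_eqvGen_lowPositions_eq {ω : Perm (Fin n)} {W : Finset (Fin n)}
    (h : ReflTransGen AdjacentSwap (lowPositions a ω) W) :
    ∃ ω', EqvGen (TypeIAdjacent a n) ω ω' ∧ lowPositions a ω' = W := by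
  induction h with
  | refl => exact ⟨ω, .refl _, rfl⟩
  | tail _ hstep ih =>
    obtain ⟨ω', hω', rfl⟩ := ih
    obtain ⟨k, hk, hne, rfl⟩ := hstep
    exact ⟨_, hω'.trans _ _ _ (.rel _ _ ⟨k, hk, rfl, by simpa using hne⟩),
      lowPositions_mul_swap ..⟩

theorem ncard_setOf_eqvGen (a b : ℕ) (ω : Perm (Fin (a + b))) :
    {ω' | EqvGen (TypeIAdjacent a (a + b)) ω ω'}.ncard = (a + b).choose a := by
  have hcard : ∀ ω' : Perm (Fin (a + b)), #(lowPositions a ω') = a := fun ω' => by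
    rw [card_lowPositions]; omega
  have hbij : Set.BijOn (lowPositions a) {ω' | EqvGen (TypeIAdjacent a (a + b)) ω ω'}
      ((powersetCard a univ : Finset (Finset (Fin (a + b)))) : Set (Finset (Fin (a + b)))) := by
    refine ⟨fun ω' _ => ?_, fun ω₁ h₁ ω₂ h₂ hW => ?_, fun W hW => ?_⟩
    · simpa using hcard ω'
    · exact eq_of_lowPositions_eq_of_sameSlopeOrder_eq hW
        ((sameSlopeOrder_eq_of_eqvGen h₁).symm.trans (sameSlopeOrder_eq_of_eqvGen h₂))
    · rw [mem_coe, mem_powersetCard] at hW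
      exact exists_eqvGen_lowPositions_eq
        (reflTransGen_adjacentSwap_of_card_eq ((hcard ω).trans hW.2.symm))
  rw [hbij.ncard_eq, Set.ncard_coe_finset, card_powersetCard, card_univ, Fintype.card_fin]

end GITRegion

end

/-- For the toric `cA_{n-1}` singularity `R_{a,b}` (`n = a+b`), every
GIT region of `Θ(Q)_ℝ` — a connected component after deleting all type I walls, i.e.
an equivalence class of chambers `C_ω` under crossings of type I walls — contains
exactly `n!/(a! b!)` chambers, and the number of GIT regions is `a! · b!`. -/
theorem git_regions_count (a b : ℕ) :
    (∀ ω : Equiv.Perm (Fin (a + b)),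
      {ω' | Relation.EqvGen (TypeIAdjacent a (a + b)) ω ω'}.ncard
        = (a + b).factorial / (a.factorial * b.factorial)) ∧
    {S : Set (Equiv.Perm (Fin (a + b))) |
        ∃ ω, S = {ω' | Relation.EqvGen (TypeIAdjacent a (a + b)) ω ω'}}.ncard
      = a.factorial * b.factorial := by
  have hchoose : (a + b).choose a * (a.factorial * b.factorial) = (a + b).factorial := by
    rw [← mul_assoc, ← Nat.choose_mul_factorial_mul_factorial (Nat.le_add_right a b),
      Nat.add_sub_cancel_left]
  refine ⟨fun ω => ?_, ?_⟩
  · rw [GITRegion.ncard_setOf_eqvGen, ← hchoose,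
      Nat.mul_div_cancel _ (by positivity)]
  · have hclasses := (Relation.EqvGen.is_equivalence (TypeIAdjacent a (a + b))).ncard_classes_mul
      (GITRegion.ncard_setOf_eqvGen a b)
    rw [Fintype.card_perm, Fintype.card_fin, ← hchoose, mul_comm] at hclasses
    exact Nat.eq_of_mul_eq_mul_left (Nat.choose_pos (Nat.le_add_right a b)) hclasses
end
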